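/- arXiv:dg-ga/9609012 — 4 statements merged into one kernel-verified Lean document; each statement's English description precedes it below -/
import Mathlib

section
/- With notation as above (two symplectic bases of (V,ω) with ω(2,1) invertible), the following identity of g×g matrices holds: ω(2^⊥,1^⊥) = transpose(ω(2,1)^{-1}) + ω(2^⊥,1) ω(2,1)^{-1} ω(2,1^⊥), where ω(a,b)_{ij} are the pairings of the respective basis vectors. -/
/-!
Expanding the second argument of `ω` in a Darboux basis `(eₖ; fₖ)` gives
`ω(u, v) = ∑ₖ ω(u, eₖ) ω(v, fₖ) - ω(u, fₖ) ω(v, eₖ)`. Applied to the vectors of the second basis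
this says `A Bᵀ = B Aᵀ` and `A Dᵀ - B Cᵀ = 1` for `A = ω(2,1)`, `B = ω(2,1^⊥)`, `C = ω(2^⊥,1)`,
`D = ω(2^⊥,1^⊥)`. The first relation makes `A⁻¹ B = Bᵀ A⁻ᵀ`, and solving the second for `D`
gives the identity.
-/

open Matrix

def LinearMap.pairingMatrix {R M κ κ' : Type*} [CommSemiring R] [AddCommMonoid M] [Module R M]
    (ω : M →ₗ[R] M →ₗ[R] R) (x : κ → M) (y : κ' → M) : Matrix κ κ' R :=
  of fun i j => ω (x i) (y j)

namespace Module.Basis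

variable {R M ι : Type*} [CommRing R] [AddCommGroup M] [Module R M] [Fintype ι] [DecidableEq ι]
  {ω : M →ₗ[R] M →ₗ[R] R} {b : Basis (ι ⊕ ι) R M}

theorem repr_inl_eq_apply_inr (hrr : ∀ i j, ω (b (.inr i)) (b (.inr j)) = 0)
    (hlr : ∀ i j, ω (b (.inl i)) (b (.inr j)) = if i = j then 1 else 0) (v : M) (m : ι) :
    b.repr v (.inl m) = ω v (b (.inr m)) := by
  conv_rhs => rw [← b.sum_repr v]
  simp only [map_sum, map_smul, LinearMap.sum_apply, LinearMap.smul_apply]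
  simp [Fintype.sum_sum_type, hrr, hlr]

theorem repr_inr_eq_neg_apply_inl (hω : ω.IsAlt) (hll : ∀ i j, ω (b (.inl i)) (b (.inl j)) = 0)
    (hlr : ∀ i j, ω (b (.inl i)) (b (.inr j)) = if i = j then 1 else 0) (v : M) (m : ι) :
    b.repr v (.inr m) = -ω v (b (.inl m)) := by
  conv_rhs => rw [← b.sum_repr v]
  simp only [map_sum, map_smul, LinearMap.sum_apply, LinearMap.smul_apply]
  simp [Fintype.sum_sum_type, hll, ← hω.neg (b (.inl _)), hlr]

theorem apply_eq_sum_of_darboux (hω : ω.IsAlt) (hll : ∀ i j, ω (b (.inl i)) (b (.inl j)) = 0)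
    (hrr : ∀ i j, ω (b (.inr i)) (b (.inr j)) = 0)
    (hlr : ∀ i j, ω (b (.inl i)) (b (.inr j)) = if i = j then 1 else 0) (u v : M) :
    ω u v = ∑ k, (ω u (b (.inl k)) * ω v (b (.inr k)) - ω u (b (.inr k)) * ω v (b (.inl k))) := by
  conv_lhs => rw [← b.sum_repr v]
  rw [map_sum, Fintype.sum_sum_type, ← Finset.sum_add_distrib]
  refine Finset.sum_congr rfl fun k _ => ?_
  simp only [map_smul, smul_eq_mul, repr_inl_eq_apply_inr hrr hlr,
    repr_inr_eq_neg_apply_inl hω hll hlr]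
  ring

theorem pairingMatrix_eq_of_darboux (hω : ω.IsAlt) (hll : ∀ i j, ω (b (.inl i)) (b (.inl j)) = 0)
    (hrr : ∀ i j, ω (b (.inr i)) (b (.inr j)) = 0)
    (hlr : ∀ i j, ω (b (.inl i)) (b (.inr j)) = if i = j then 1 else 0)
    {κ κ' : Type*} (x : κ → M) (y : κ' → M) :
    ω.pairingMatrix x y =
      ω.pairingMatrix x (b ∘ .inl) * (ω.pairingMatrix y (b ∘ .inr))ᵀ -
        ω.pairingMatrix x (b ∘ .inr) * (ω.pairingMatrix y (b ∘ .inl))ᵀ := by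
  ext i j
  simpa [LinearMap.pairingMatrix, mul_apply, Finset.sum_sub_distrib] using
    apply_eq_sum_of_darboux hω hll hrr hlr (x i) (y j)

end Module.Basis

namespace Matrix

variable {n R : Type*} [Fintype n] [DecidableEq n] [CommRing R]

theorem inv_mul_eq_transpose_mul_inv_transpose {A B : Matrix n n R} (hA : IsUnit A.det)
    (hAB : A * Bᵀ = B * Aᵀ) : A⁻¹ * B = Bᵀ * A⁻¹ᵀ := by
  have h := congrArg (fun X => A⁻¹ * X * Aᵀ⁻¹) hAB
  simp only [Matrix.mul_assoc, nonsing_inv_mul_cancel_left _ _ hA] at h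
  rw [mul_nonsing_inv _ (isUnit_det_transpose A hA), Matrix.mul_one] at h
  rw [transpose_nonsing_inv, h]

theorem eq_transpose_inv_add_of_mul_transpose_sub {A B C D : Matrix n n R} (hA : IsUnit A.det)
    (hAB : A * Bᵀ = B * Aᵀ) (hAD : A * Dᵀ - B * Cᵀ = 1) : D = A⁻¹ᵀ + C * A⁻¹ * B := by
  have hDt : Dᵀ = A⁻¹ + A⁻¹ * B * Cᵀ := by
    rw [← nonsing_inv_mul_cancel_left A Dᵀ hA, eq_add_of_sub_eq hAD, Matrix.mul_add,
      Matrix.mul_one, Matrix.mul_assoc]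
  rw [← transpose_transpose D, hDt, transpose_add, transpose_mul, transpose_mul,
    transpose_transpose, Matrix.mul_assoc, ← inv_mul_eq_transpose_mul_inv_transpose hA hAB,
    ← Matrix.mul_assoc]

end Matrix

theorem stmt_2_general (g : ℕ) (V : Type*) [AddCommGroup V] [Module ℝ V]
    (ω : V →ₗ[ℝ] V →ₗ[ℝ] ℝ) (halt : ∀ v : V, ω v v = 0)
    (b1 b2 : Module.Basis (Fin g ⊕ Fin g) ℝ V)
    (h1a : ∀ i j, ω (b1 (Sum.inl i)) (b1 (Sum.inl j)) = 0)
    (h1b : ∀ i j, ω (b1 (Sum.inr i)) (b1 (Sum.inr j)) = 0)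
    (h1c : ∀ i j, ω (b1 (Sum.inl i)) (b1 (Sum.inr j)) = if i = j then 1 else 0)
    (h2a : ∀ i j, ω (b2 (Sum.inl i)) (b2 (Sum.inl j)) = 0)
    (h2c : ∀ i j, ω (b2 (Sum.inl i)) (b2 (Sum.inr j)) = if i = j then 1 else 0)
    (M21 M2p1 M21p M2p1p : Matrix (Fin g) (Fin g) ℝ)
    (hM21 : ∀ i j, M21 i j = ω (b2 (Sum.inl i)) (b1 (Sum.inl j)))
    (hM2p1 : ∀ i j, M2p1 i j = ω (b2 (Sum.inr i)) (b1 (Sum.inl j)))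
    (hM21p : ∀ i j, M21p i j = ω (b2 (Sum.inl i)) (b1 (Sum.inr j)))
    (hM2p1p : ∀ i j, M2p1p i j = ω (b2 (Sum.inr i)) (b1 (Sum.inr j)))
    (hinv : IsUnit M21.det) :
    M2p1p = (M21⁻¹).transpose + M2p1 * M21⁻¹ * M21p := by
  obtain rfl : M21 = ω.pairingMatrix (b2 ∘ .inl) (b1 ∘ .inl) := Matrix.ext hM21
  obtain rfl : M2p1 = ω.pairingMatrix (b2 ∘ .inr) (b1 ∘ .inl) := Matrix.ext hM2p1
  obtain rfl : M21p = ω.pairingMatrix (b2 ∘ .inl) (b1 ∘ .inr) := Matrix.ext hM21p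
  obtain rfl : M2p1p = ω.pairingMatrix (b2 ∘ .inr) (b1 ∘ .inr) := Matrix.ext hM2p1p
  refine Matrix.eq_transpose_inv_add_of_mul_transpose_sub hinv ?_ ?_
  · rw [← sub_eq_zero, ← b1.pairingMatrix_eq_of_darboux halt h1a h1b h1c]
    exact Matrix.ext h2a
  · rw [← b1.pairingMatrix_eq_of_darboux halt h1a h1b h1c]
    ext i j
    simpa [LinearMap.pairingMatrix, Matrix.one_apply] using h2c i j

/-- For two symplectic bases `(W₁ᵢ ; W₁ᵢ^⊥)`, `(W₂ᵢ ; W₂ᵢ^⊥)` of a real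
symplectic vector space `(V, ω)` with `ω(2,1)` invertible, one has
`ω(2^⊥,1^⊥) = ᵗ(ω(2,1)⁻¹) + ω(2^⊥,1) ω(2,1)⁻¹ ω(2,1^⊥)`. -/
theorem stmt_2 (g : ℕ) (V : Type*) [AddCommGroup V] [Module ℝ V]
    (ω : V →ₗ[ℝ] V →ₗ[ℝ] ℝ) (halt : ∀ v : V, ω v v = 0)
    (b1 b2 : Module.Basis (Fin g ⊕ Fin g) ℝ V)
    (h1a : ∀ i j, ω (b1 (Sum.inl i)) (b1 (Sum.inl j)) = 0)
    (h1b : ∀ i j, ω (b1 (Sum.inr i)) (b1 (Sum.inr j)) = 0)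
    (h1c : ∀ i j, ω (b1 (Sum.inl i)) (b1 (Sum.inr j)) = if i = j then 1 else 0)
    (h2a : ∀ i j, ω (b2 (Sum.inl i)) (b2 (Sum.inl j)) = 0)
    (h2b : ∀ i j, ω (b2 (Sum.inr i)) (b2 (Sum.inr j)) = 0)
    (h2c : ∀ i j, ω (b2 (Sum.inl i)) (b2 (Sum.inr j)) = if i = j then 1 else 0)
    (M21 M2p1 M21p M2p1p : Matrix (Fin g) (Fin g) ℝ)
    (hM21 : ∀ i j, M21 i j = ω (b2 (Sum.inl i)) (b1 (Sum.inl j)))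
    (hM2p1 : ∀ i j, M2p1 i j = ω (b2 (Sum.inr i)) (b1 (Sum.inl j)))
    (hM21p : ∀ i j, M21p i j = ω (b2 (Sum.inl i)) (b1 (Sum.inr j)))
    (hM2p1p : ∀ i j, M2p1p i j = ω (b2 (Sum.inr i)) (b1 (Sum.inr j)))
    (hinv : IsUnit M21.det) :
    M2p1p = (M21⁻¹).transpose + M2p1 * M21⁻¹ * M21p :=
  stmt_2_general g V ω halt b1 b2 h1a h1b h1c h2a h2c M21 M2p1 M21p M2p1p hM21 hM2p1 hM21p hM2p1p
    hinv
end

section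
/- If L₁ and L₃ are transverse Lagrangian subspaces of a symplectic vector space (V,ω) (so V = L₁ ⊕ L₃), and p₃₁ : V → L₃ denotes the projection onto L₃ along L₁, then the Maslov-Kashiwara index τ(L₁, L₂, L₃) equals the signature of the quadratic form H(x₂) = ω(x₂, p₃₁ x₂) on L₂, for any Lagrangian subspace L₂. -/
/-- The maximal dimension of a subspace on which the quadratic map `q` is positive. -/
noncomputable def posIdx {W : Type*} [AddCommGroup W] [Module ℝ W] (q : W → ℝ) : ℕ :=
  sSup {n : ℕ | ∃ U : Submodule ℝ W, Module.finrank ℝ U = n ∧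
    ∀ x : W, x ∈ U → x ≠ 0 → 0 < q x}

/-- The signature (positive index minus negative index) of a quadratic map `q`. -/
noncomputable def qSignature {W : Type*} [AddCommGroup W] [Module ℝ W] (q : W → ℝ) : ℤ :=
  (posIdx q : ℤ) - (posIdx (fun x => -q x) : ℤ)

/-- The Maslov-Kashiwara index of a triple of (Lagrangian) subspaces: the signature of
the quadratic form `G(x₁⊕x₂⊕x₃) = ω(x₁,x₂) + ω(x₂,x₃) + ω(x₃,x₁)` on `L₁ ⊕ L₂ ⊕ L₃`. -/
noncomputable def maslovIndex {V : Type*} [AddCommGroup V] [Module ℝ V]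
    (ω : V →ₗ[ℝ] V →ₗ[ℝ] ℝ) (L₁ L₂ L₃ : Submodule ℝ V) : ℤ :=
  qSignature (fun x : ↥L₁ × ↥L₂ × ↥L₃ =>
    ω (x.1 : V) (x.2.1 : V) + ω (x.2.1 : V) (x.2.2 : V) + ω (x.2.2 : V) (x.1 : V))

/-- A Lagrangian subspace: isotropic of half the dimension of `V`. -/
def IsLagrangianSub {V : Type*} [AddCommGroup V] [Module ℝ V]
    (ω : V →ₗ[ℝ] V →ₗ[ℝ] ℝ) (L : Submodule ℝ V) : Prop :=
  (∀ x ∈ L, ∀ y ∈ L, ω x y = 0) ∧ 2 * Module.finrank ℝ L = Module.finrank ℝ V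

/-!
Write `x₂ = a + b` with `a = x₂ - p x₂ ∈ L₁` and `b = p x₂ ∈ L₃`. As `L₁` and `L₃` are isotropic
and `ω` is alternating, the change of variables `u = x₁ - a`, `v = x₃ - b` turns the
Maslov–Kashiwara form into `H(x₂) + ω(v, u)`. The second summand is a perfect pairing of `L₃`
with `L₁ ≅ L₃*`: it is positive definite on the graph of some `φ : L₁ → L₃`, negative definite
on the graph of `-φ` and zero on `L₁`, so it has signature zero. Signatures add over such sums
because `H` is symmetric, hence has a positive and a nonpositive subspace of complementary
dimensions.
-/

open Module

section PosIdx

variable {W W' : Type*} [AddCommGroup W] [Module ℝ W] [AddCommGroup W'] [Module ℝ W']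

lemma bddAbove_posIdx_set [FiniteDimensional ℝ W] (q : W → ℝ) :
    BddAbove {n : ℕ | ∃ U : Submodule ℝ W, finrank ℝ U = n ∧ ∀ x : W, x ∈ U → x ≠ 0 → 0 < q x} :=
  ⟨finrank ℝ W, fun _ ⟨U, hU, _⟩ => hU ▸ U.finrank_le⟩

lemma le_posIdx [FiniteDimensional ℝ W] (q : W → ℝ) {U : Submodule ℝ W}
    (hU : ∀ x ∈ U, x ≠ 0 → 0 < q x) : finrank ℝ U ≤ posIdx q :=
  le_csSup (bddAbove_posIdx_set q) ⟨U, rfl, hU⟩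

lemma exists_finrank_eq_posIdx [FiniteDimensional ℝ W] (q : W → ℝ) :
    ∃ U : Submodule ℝ W, finrank ℝ U = posIdx q ∧ ∀ x ∈ U, x ≠ 0 → 0 < q x :=
  Nat.sSup_mem (s := {n | ∃ U : Submodule ℝ W, finrank ℝ U = n ∧ ∀ x ∈ U, x ≠ 0 → 0 < q x})
    ⟨0, ⊥, finrank_bot ℝ W, fun _ hx hx0 => (hx0 ((Submodule.mem_bot ℝ).1 hx)).elim⟩
    (bddAbove_posIdx_set q)

lemma posIdx_add_finrank_le [FiniteDimensional ℝ W] (q : W → ℝ) {N : Submodule ℝ W}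
    (hN : ∀ x ∈ N, q x ≤ 0) : posIdx q + finrank ℝ N ≤ finrank ℝ W := by
  obtain ⟨U, hU, hUpos⟩ := exists_finrank_eq_posIdx q
  have hUN : U ⊓ N = ⊥ := (Submodule.eq_bot_iff _).2 fun x hx =>
    by_contra fun hx0 => (hUpos x hx.1 hx0).not_ge (hN x hx.2)
  have := Submodule.finrank_sup_add_finrank_inf_eq U N
  rw [hUN, finrank_bot, add_zero, hU] at this
  exact this ▸ (U ⊔ N).finrank_le

lemma posIdx_le_posIdx_comp [FiniteDimensional ℝ W] (q : W → ℝ) (e : W' ≃ₗ[ℝ] W) :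
    posIdx q ≤ posIdx (q ∘ e) := by
  have : FiniteDimensional ℝ W' := e.symm.finiteDimensional
  obtain ⟨U, hU, hUpos⟩ := exists_finrank_eq_posIdx q
  rw [← hU, ← e.symm.finrank_map_eq U]
  refine le_posIdx _ fun x hx hx0 => hUpos _ ?_ (e.map_ne_zero_iff.2 hx0)
  simpa using (Submodule.mem_map_equiv (p := U) (e := e.symm)).1 hx

lemma posIdx_comp_linearEquiv [FiniteDimensional ℝ W] (q : W → ℝ) (e : W' ≃ₗ[ℝ] W) :
    posIdx (q ∘ e) = posIdx q := by
  have : FiniteDimensional ℝ W' := e.symm.finiteDimensional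
  refine le_antisymm ?_ (posIdx_le_posIdx_comp q e)
  simpa [Function.comp_def] using posIdx_le_posIdx_comp (q ∘ e) e.symm

lemma qSignature_comp_linearEquiv [FiniteDimensional ℝ W] (q : W → ℝ) (e : W' ≃ₗ[ℝ] W) :
    qSignature (q ∘ e) = qSignature q := by
  simp only [qSignature]
  rw [← posIdx_comp_linearEquiv q e, ← posIdx_comp_linearEquiv (fun x => -q x) e]
  rfl

end PosIdx

section InertiaPair

variable {W W₁ W₂ : Type*} [AddCommGroup W] [Module ℝ W] [FiniteDimensional ℝ W]
  [AddCommGroup W₁] [Module ℝ W₁] [FiniteDimensional ℝ W₁]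
  [AddCommGroup W₂] [Module ℝ W₂] [FiniteDimensional ℝ W₂]

def IsInertiaPair (q : W → ℝ) (P N : Submodule ℝ W) : Prop :=
  (∀ x ∈ P, x ≠ 0 → 0 < q x) ∧ (∀ x ∈ N, q x ≤ 0) ∧ finrank ℝ W ≤ finrank ℝ P + finrank ℝ N

lemma IsInertiaPair.posIdx_eq {q : W → ℝ} {P N : Submodule ℝ W} (h : IsInertiaPair q P N) :
    posIdx q = finrank ℝ P := by
  have := le_posIdx q h.1
  have := posIdx_add_finrank_le q h.2.1
  have := h.2.2
  omega

lemma Submodule.finrank_prod (P₁ : Submodule ℝ W₁) (P₂ : Submodule ℝ W₂) :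
    finrank ℝ (P₁.prod P₂) = finrank ℝ P₁ + finrank ℝ P₂ := by
  rw [← P₁.range_subtype, ← P₂.range_subtype, ← LinearMap.range_prodMap,
    LinearMap.finrank_range_of_inj, Module.finrank_prod, P₁.range_subtype, P₂.range_subtype]
  exact Prod.map_injective.2 ⟨P₁.injective_subtype, P₂.injective_subtype⟩

lemma IsInertiaPair.prod {q₁ : W₁ → ℝ} {q₂ : W₂ → ℝ} {P₁ N₁ : Submodule ℝ W₁}
    {P₂ N₂ : Submodule ℝ W₂} (h₁ : IsInertiaPair q₁ P₁ N₁) (h₂ : IsInertiaPair q₂ P₂ N₂)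
    (hq₁ : q₁ 0 = 0) (hq₂ : q₂ 0 = 0) :
    IsInertiaPair (fun z : W₁ × W₂ => q₁ z.1 + q₂ z.2) (P₁.prod P₂) (N₁.prod N₂) := by
  have nonneg₁ : ∀ x ∈ P₁, 0 ≤ q₁ x := fun x hx =>
    (eq_or_ne x 0).elim (fun h => (h ▸ hq₁).ge) fun h => (h₁.1 x hx h).le
  have nonneg₂ : ∀ x ∈ P₂, 0 ≤ q₂ x := fun x hx =>
    (eq_or_ne x 0).elim (fun h => (h ▸ hq₂).ge) fun h => (h₂.1 x hx h).le
  refine ⟨fun z ⟨hz₁, hz₂⟩ hz => ?_, fun z ⟨hz₁, hz₂⟩ => add_nonpos (h₁.2.1 _ hz₁) (h₂.2.1 _ hz₂),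
    ?_⟩
  · by_cases h : z.1 = 0
    · have : z.2 ≠ 0 := fun h' => hz (Prod.ext h h')
      exact add_pos_of_nonneg_of_pos (nonneg₁ _ hz₁) (h₂.1 _ hz₂ this)
    · exact add_pos_of_pos_of_nonneg (h₁.1 _ hz₁ h) (nonneg₂ _ hz₂)
  · rw [finrank_prod, Submodule.finrank_prod, Submodule.finrank_prod]
    linarith [h₁.2.2, h₂.2.2]

lemma posIdx_prod_add {q₁ : W₁ → ℝ} {q₂ : W₂ → ℝ}
    (h₁ : ∃ P N, IsInertiaPair q₁ P N) (h₂ : ∃ P N, IsInertiaPair q₂ P N)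
    (hq₁ : q₁ 0 = 0) (hq₂ : q₂ 0 = 0) :
    posIdx (fun z : W₁ × W₂ => q₁ z.1 + q₂ z.2) = posIdx q₁ + posIdx q₂ := by
  obtain ⟨P₁, N₁, h₁⟩ := h₁
  obtain ⟨P₂, N₂, h₂⟩ := h₂
  rw [(h₁.prod h₂ hq₁ hq₂).posIdx_eq, h₁.posIdx_eq, h₂.posIdx_eq, Submodule.finrank_prod]

lemma qSignature_prod_add {q₁ : W₁ → ℝ} {q₂ : W₂ → ℝ}
    (h₁ : ∃ P N, IsInertiaPair q₁ P N) (h₁' : ∃ P N, IsInertiaPair (fun x => -q₁ x) P N)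
    (h₂ : ∃ P N, IsInertiaPair q₂ P N) (h₂' : ∃ P N, IsInertiaPair (fun x => -q₂ x) P N)
    (hq₁ : q₁ 0 = 0) (hq₂ : q₂ 0 = 0) :
    qSignature (fun z : W₁ × W₂ => q₁ z.1 + q₂ z.2) = qSignature q₁ + qSignature q₂ := by
  have hneg : (fun z : W₁ × W₂ => -(q₁ z.1 + q₂ z.2)) = fun z => -q₁ z.1 + -q₂ z.2 :=
    funext fun z => neg_add _ _
  simp only [qSignature]
  rw [hneg, posIdx_prod_add h₁ h₂ hq₁ hq₂,
    posIdx_prod_add h₁' h₂' (by simp [hq₁]) (by simp [hq₂])]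
  push_cast
  ring

end InertiaPair

section SymmetricForm

variable {W : Type*} [AddCommGroup W] [Module ℝ W] {B : LinearMap.BilinForm ℝ W}

lemma pos_on_sup_span_singleton (hB : B.IsSymm) {U : Submodule ℝ W}
    (hU : ∀ y ∈ U, y ≠ 0 → 0 < B y y) {x : W} (hxU : x ∈ B.orthogonal U) (hx : 0 < B x x) :
    ∀ y ∈ U ⊔ ℝ ∙ x, y ≠ 0 → 0 < B y y := by
  intro y hy hy0
  obtain ⟨u, hu, _, ht, rfl⟩ := Submodule.mem_sup.1 hy
  obtain ⟨t, rfl⟩ := Submodule.mem_span_singleton.1 ht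
  have hux : B u x = 0 := hxU u hu
  have hxu : B x u = 0 := hB.eq x u ▸ hux
  have hexpand : B (u + t • x) (u + t • x) = B u u + t ^ 2 * B x x := by
    simp only [map_add, map_smul, LinearMap.add_apply, LinearMap.smul_apply, smul_eq_mul,
      hux, hxu]
    ring
  rw [hexpand]
  by_cases hu0 : u = 0
  · have ht0 : t ≠ 0 := by rintro rfl; simp [hu0] at hy0
    rw [hu0, map_zero, zero_add]
    positivity
  · exact add_pos_of_pos_of_nonneg (hU u hu hu0) (by positivity)

/-- The witnesses are a maximal positive subspace and its `B`-orthogonal complement. -/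
lemma exists_isInertiaPair_of_isSymm [FiniteDimensional ℝ W] (hB : B.IsSymm) :
    ∃ P N, IsInertiaPair (fun x => B x x) P N := by
  obtain ⟨P, hP, hPpos⟩ := exists_finrank_eq_posIdx fun x => B x x
  refine ⟨P, B.orthogonal P, hPpos, fun x hx => not_lt.1 fun hxpos => ?_, ?_⟩
  · have hxP : x ∉ P := fun h => hxpos.ne' (hx x h)
    have hlt := Submodule.finrank_lt_finrank_of_lt (Submodule.lt_sup_iff_notMem.2 hxP)
    have hle := le_posIdx _ (pos_on_sup_span_singleton hB hPpos hx hxpos)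
    omega
  · have := B.finrank_add_finrank_orthogonal' P
    omega

end SymmetricForm

lemma Module.Basis.toDual_apply_self_pos {M ι : Type*} [AddCommGroup M] [Module ℝ M]
    [Fintype ι] [DecidableEq ι] (e : Basis ι ℝ M) {u : M} (hu : u ≠ 0) : 0 < e.toDual u u := by
  have hsum : e.toDual u u = ∑ i, e.repr u i ^ 2 := by
    nth_rewrite 2 [← e.sum_repr u]
    simp only [map_sum, map_smul, e.toDual_apply_left, smul_eq_mul, sq]
  obtain ⟨i, hi⟩ : ∃ i, e.repr u i ≠ 0 := by
    by_contra! h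
    exact hu (e.repr.map_eq_zero_iff.1 (Finsupp.ext h))
  rw [hsum]
  exact Finset.sum_pos' (fun j _ => sq_nonneg _) ⟨i, Finset.mem_univ i, by positivity⟩

section Pairing

variable {M N : Type*} [AddCommGroup M] [Module ℝ M] [AddCommGroup N] [Module ℝ N]
  {β : N →ₗ[ℝ] M →ₗ[ℝ] ℝ}

lemma LinearMap.finrank_graph (φ : M →ₗ[ℝ] N) : finrank ℝ φ.graph = finrank ℝ M := by
  rw [LinearMap.graph_eq_range_prod, LinearMap.finrank_range_of_inj]
  exact fun x y h => congrArg Prod.fst h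

/-- Transport the positive definite form `e.toDual` of a basis `e` of `M` along `N ≃ M*`. -/
lemma exists_pos_of_bijective [FiniteDimensional ℝ M] (hβ : Function.Bijective β) :
    ∃ φ : M →ₗ[ℝ] N, ∀ u ≠ 0, 0 < β (φ u) u := by
  let e := Module.finBasis ℝ M
  let ψ := LinearEquiv.ofBijective β hβ
  refine ⟨ψ.symm.toLinearMap ∘ₗ e.toDual, fun u hu => ?_⟩
  have : β (ψ.symm (e.toDual u)) = e.toDual u := ψ.apply_symm_apply _
  simpa [this] using e.toDual_apply_self_pos hu

lemma isInertiaPair_pairing [FiniteDimensional ℝ M] [FiniteDimensional ℝ N] {φ : M →ₗ[ℝ] N}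
    (hφ : ∀ u ≠ 0, 0 < β (φ u) u) (hdim : finrank ℝ N ≤ finrank ℝ M) :
    IsInertiaPair (fun y : M × N => β y.2 y.1) φ.graph
      (LinearMap.range (LinearMap.inl ℝ M N)) := by
  refine ⟨fun y hy hy0 => ?_, ?_, ?_⟩
  · rw [LinearMap.mem_graph_iff] at hy
    have hy1 : y.1 ≠ 0 := fun h => hy0 (Prod.ext h (by rw [hy, h, map_zero]; rfl))
    simpa [hy] using hφ y.1 hy1
  · rintro _ ⟨m, rfl⟩
    simp
  · rw [finrank_prod, LinearMap.finrank_graph,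
      LinearMap.finrank_range_of_inj LinearMap.inl_injective]
    omega

lemma isInertiaPair_neg_pairing [FiniteDimensional ℝ M] [FiniteDimensional ℝ N] {φ : M →ₗ[ℝ] N}
    (hφ : ∀ u ≠ 0, 0 < β (φ u) u) (hdim : finrank ℝ N ≤ finrank ℝ M) :
    IsInertiaPair (fun y : M × N => -β y.2 y.1) (-φ).graph
      (LinearMap.range (LinearMap.inl ℝ M N)) :=
  isInertiaPair_pairing (β := -β) (fun u hu => by simpa using hφ u hu) hdim

end Pairing

lemma qSignature_add_pairing {W M N : Type*}
    [AddCommGroup W] [Module ℝ W] [FiniteDimensional ℝ W]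
    [AddCommGroup M] [Module ℝ M] [FiniteDimensional ℝ M]
    [AddCommGroup N] [Module ℝ N] [FiniteDimensional ℝ N] {q : W → ℝ}
    (hq : ∃ P Q, IsInertiaPair q P Q) (hq' : ∃ P Q, IsInertiaPair (fun x => -q x) P Q)
    (hq0 : q 0 = 0) {β : N →ₗ[ℝ] M →ₗ[ℝ] ℝ} (hβ : Function.Bijective β) :
    qSignature (fun y : W × M × N => q y.1 + β y.2.2 y.2.1) = qSignature q := by
  obtain ⟨φ, hφ⟩ := exists_pos_of_bijective hβ
  have hdim : finrank ℝ N ≤ finrank ℝ M :=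
    ((LinearEquiv.ofBijective β hβ).finrank_eq.trans (Subspace.dual_finrank_eq)).le
  have hK := isInertiaPair_pairing hφ hdim
  have hK' := isInertiaPair_neg_pairing hφ hdim
  rw [qSignature_prod_add hq hq' ⟨_, _, hK⟩ ⟨_, _, hK'⟩ hq0 (by simp), add_eq_left, qSignature,
    hK.posIdx_eq, hK'.posIdx_eq, LinearMap.finrank_graph, LinearMap.finrank_graph, sub_self]

section Shear

variable {R A B C : Type*} [Ring R] [AddCommGroup A] [Module R A] [AddCommGroup B] [Module R B]
  [AddCommGroup C] [Module R C]

def shearEquiv (d : B →ₗ[R] A × C) : (A × B × C) ≃ₗ[R] (B × A × C) where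
  toFun x := (x.2.1, (x.1, x.2.2) - d x.2.1)
  invFun y := ((y.2 + d y.1).1, y.1, (y.2 + d y.1).2)
  map_add' x y := by
    simp only [Prod.fst_add, Prod.snd_add, map_add, Prod.mk_add_mk]
    ext <;> simp <;> abel
  map_smul' c x := by
    simp only [Prod.smul_fst, Prod.smul_snd, map_smul, RingHom.id_apply, Prod.smul_mk]
    ext <;> simp [smul_sub]
  left_inv x := by simp
  right_inv y := by ext <;> simp

end Shear

section Symplectic

variable {V : Type*} [AddCommGroup V] [Module ℝ V] {ω : V →ₗ[ℝ] V →ₗ[ℝ] ℝ}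

lemma LinearMap.IsAlt.apply_add_eq_of_isotropic (hω : ω.IsAlt) {a a' b b' : V}
    (ha : ω a a' = 0) (hb : ω b b' = 0) (h : ω (a + b) (a' + b') = 0) :
    ω (a + b) b' = ω (a' + b') b := by
  have := hω.neg b b'
  have := hω.neg b a'
  simp only [map_add, LinearMap.add_apply] at h ⊢
  linarith

lemma LinearMap.IsAlt.maslov_form_eq (hω : ω.IsAlt) {x₁ x₃ a b : V} (h₁ : ω x₁ a = 0)
    (h₃ : ω b x₃ = 0) :
    ω x₁ (a + b) + ω (a + b) x₃ + ω x₃ x₁ = ω (a + b) b + ω (x₃ - b) (x₁ - a) := by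
  have := hω.neg x₁ b
  have := hω.neg a x₃
  have := hω.neg a b
  have := hω b
  simp only [map_add, map_sub, LinearMap.add_apply, LinearMap.sub_apply]
  linarith

lemma injective_compl₁₂_subtype (hnd : ∀ v : V, (∀ w : V, ω v w = 0) → v = 0)
    {L₁ L₃ : Submodule ℝ V} (hL₃ : ∀ x ∈ L₃, ∀ y ∈ L₃, ω x y = 0) (hsup : L₁ ⊔ L₃ = ⊤) :
    Function.Injective (ω.compl₁₂ L₃.subtype L₁.subtype) := by
  refine (injective_iff_map_eq_zero _).2 fun v hv => Subtype.ext (hnd v fun w => ?_)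
  obtain ⟨u, hu, t, ht, rfl⟩ := Submodule.mem_sup.1 (hsup ▸ Submodule.mem_top : w ∈ L₁ ⊔ L₃)
  rw [map_add, hL₃ v v.2 t ht, add_zero]
  exact LinearMap.congr_fun hv ⟨u, hu⟩

end Symplectic

/-- If `L₁` and `L₃` are transverse Lagrangians and `p₃₁` is the
projection onto `L₃` along `L₁`, then `τ(L₁,L₂,L₃)` is the signature of the quadratic
form `x₂ ↦ ω(x₂, p₃₁ x₂)` on `L₂`. -/
theorem stmt_7 (V : Type*) [AddCommGroup V] [Module ℝ V] [FiniteDimensional ℝ V]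
    (ω : V →ₗ[ℝ] V →ₗ[ℝ] ℝ) (halt : ∀ v : V, ω v v = 0)
    (hnd : ∀ v : V, (∀ w : V, ω v w = 0) → v = 0)
    (L₁ L₂ L₃ : Submodule ℝ V)
    (h1 : IsLagrangianSub ω L₁) (h2 : IsLagrangianSub ω L₂) (h3 : IsLagrangianSub ω L₃)
    (htrans : L₁ ⊓ L₃ = ⊥ ∧ L₁ ⊔ L₃ = ⊤)
    (p : V →ₗ[ℝ] V) (hp : ∀ x : V, p x ∈ L₃ ∧ x - p x ∈ L₁) :
    maslovIndex ω L₁ L₂ L₃ = qSignature (fun x : ↥L₂ => ω (x : V) (p (x : V))) := by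
  have hω : ω.IsAlt := halt
  let H : LinearMap.BilinForm ℝ L₂ := ω.compl₁₂ L₂.subtype (p ∘ₗ L₂.subtype)
  have hH : H.IsSymm := ⟨fun x y => by
    simpa [H] using hω.apply_add_eq_of_isotropic (h1.1 _ (hp x).2 _ (hp y).2)
      (h3.1 _ (hp x).1 _ (hp y).1) (by simpa using h2.1 _ x.2 _ y.2)⟩
  let β := ω.compl₁₂ L₃.subtype L₁.subtype
  have hβ : Function.Bijective β := by
    have hinj := injective_compl₁₂_subtype hnd h3.1 htrans.2
    refine ⟨hinj, (LinearMap.injective_iff_surjective_of_finrank_eq_finrank ?_).1 hinj⟩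
    rw [Subspace.dual_finrank_eq]
    linarith [h1.2, h3.2]
  let d : L₂ →ₗ[ℝ] L₁ × L₃ :=
    (LinearMap.codRestrict L₁ ((LinearMap.id - p) ∘ₗ L₂.subtype) fun x => (hp x).2).prod
      (LinearMap.codRestrict L₃ (p ∘ₗ L₂.subtype) fun x => (hp x).1)
  have hG : (fun x : L₁ × L₂ × L₃ => ω x.1 x.2.1 + ω x.2.1 x.2.2 + ω x.2.2 x.1) =
      (fun y : L₂ × L₁ × L₃ => H y.1 y.1 + β y.2.2 y.2.1) ∘ shearEquiv d := by
    funext ⟨⟨x₁, hx₁⟩, ⟨x₂, _⟩, ⟨x₃, hx₃⟩⟩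
    have key := hω.maslov_form_eq (h1.1 x₁ hx₁ _ (hp x₂).2) (h3.1 _ (hp x₂).1 x₃ hx₃)
    rw [sub_add_cancel] at key
    exact key
  rw [maslovIndex, hG, qSignature_comp_linearEquiv,
    qSignature_add_pairing (exists_isInertiaPair_of_isSymm hH)
      (exists_isInertiaPair_of_isSymm hH.neg) (by simp) hβ]
  rfl
end

section
/- For any triple L₁, L₂, L₃ of Lagrangian subspaces of a 2g-dimensional symplectic vector space (V,ω), the Maslov-Kashiwara index satisfies the parity congruence τ(L₁, L₂, L₃) ≡ g + dim(L₁ ∩ L₂) + dim(L₂ ∩ L₃) + dim(L₃ ∩ L₁) (mod 2). -/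
/-
The signature of a real quadratic form has the parity of its rank: by Sylvester's law of inertia
`p + n + dim rad = dim`, so `τ = p - n ≡ dim - dim rad (mod 2)`. Here `dim (L₁ ⊕ L₂ ⊕ L₃) = 3g`.
Since a Lagrangian subspace is its own `ω`-orthogonal, `(x₁, x₂, x₃)` lies in the radical of `G`
iff `x₂ - x₃ ∈ L₁`, `x₃ - x₁ ∈ L₂` and `x₁ - x₂ ∈ L₃`; these are exactly the triples
`(a + c, a + b, b + c)` with `a ∈ L₁ ∩ L₂`, `b ∈ L₂ ∩ L₃`, `c ∈ L₃ ∩ L₁`, and this parametrisation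
is injective, so `dim rad = dim (L₁ ∩ L₂) + dim (L₂ ∩ L₃) + dim (L₃ ∩ L₁)`.
-/

open Module QuadraticMap QuadraticForm

section Signature

variable {W : Type*} [AddCommGroup W] [Module ℝ W] [FiniteDimensional ℝ W]

lemma posIdx_eq_sigPos (Q : QuadraticForm ℝ W) : posIdx Q = sigPos Q := by
  rw [← (sigPos_isGreatest Q).csSup_eq, posIdx]
  congr! 4 with n U
  simp [PosDef]

lemma qSignature_eq_sigPos_sub_sigNeg (Q : QuadraticForm ℝ W) :
    qSignature Q = sigPos Q - sigNeg Q := by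
  rw [qSignature, ← sigPos_neg, ← posIdx_eq_sigPos, ← posIdx_eq_sigPos]
  rfl

lemma qSignature_add_finrank_radical_modEq (Q : QuadraticForm ℝ W) :
    qSignature Q + finrank ℝ Q.radical ≡ finrank ℝ W [ZMOD 2] := by
  have h := sigPos_add_sigNeg_add_radical (Q := Q)
  rw [qSignature_eq_sigPos_sub_sigNeg, Int.ModEq]
  omega

end Signature

section PairwiseSum

variable {K M : Type*} [Field K] [CharZero K] [AddCommGroup M] [Module K M]
  (L₁ L₂ L₃ : Submodule K M)

def pairwiseSum : ↥(L₁ ⊓ L₂) × ↥(L₂ ⊓ L₃) × ↥(L₃ ⊓ L₁) →ₗ[K] L₁ × L₂ × L₃ where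
  toFun d := (⟨d.1 + d.2.2, add_mem d.1.2.1 d.2.2.2.2⟩, ⟨d.1 + d.2.1, add_mem d.1.2.2 d.2.1.2.1⟩,
    ⟨d.2.1 + d.2.2, add_mem d.2.1.2.2 d.2.2.2.1⟩)
  map_add' _ _ := by ext <;> simp only [Prod.fst_add, Prod.snd_add, Submodule.coe_add] <;> abel
  map_smul' _ _ := by ext <;> simp [smul_add]

variable {L₁ L₂ L₃}

lemma pairwiseSum_injective : Function.Injective (pairwiseSum L₁ L₂ L₃) := by
  rw [← LinearMap.ker_eq_bot, LinearMap.ker_eq_bot']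
  rintro ⟨⟨a, ha⟩, ⟨b, hb⟩, ⟨c, hc⟩⟩ h
  simp only [pairwiseSum, LinearMap.coe_mk, AddHom.coe_mk, Prod.ext_iff, Prod.fst_zero,
    Prod.snd_zero, Submodule.mk_eq_zero] at h ⊢
  obtain ⟨hac, hab, hbc⟩ := h
  refine ⟨?_, ?_, ?_⟩
  · linear_combination (norm := module) (2⁻¹ : K) • (hac + hab - hbc)
  · linear_combination (norm := module) (2⁻¹ : K) • (hab + hbc - hac)
  · linear_combination (norm := module) (2⁻¹ : K) • (hbc + hac - hab)

lemma mem_range_pairwiseSum_iff {x : L₁ × L₂ × L₃} :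
    x ∈ LinearMap.range (pairwiseSum L₁ L₂ L₃) ↔
      (x.2.1 - x.2.2 : M) ∈ L₁ ∧ (x.2.2 - x.1 : M) ∈ L₂ ∧ (x.1 - x.2.1 : M) ∈ L₃ := by
  obtain ⟨⟨x₁, h₁⟩, ⟨x₂, h₂⟩, ⟨x₃, h₃⟩⟩ := x
  simp only [LinearMap.mem_range, pairwiseSum, LinearMap.coe_mk, AddHom.coe_mk, Prod.ext_iff,
    Subtype.ext_iff, Prod.exists, Subtype.exists, Submodule.mem_inf]
  constructor
  · rintro ⟨a, ⟨ha₁, ha₂⟩, b, ⟨hb₂, hb₃⟩, c, ⟨hc₃, hc₁⟩, rfl, rfl, rfl⟩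
    refine ⟨?_, ?_, ?_⟩
    · convert sub_mem ha₁ hc₁ using 1; abel
    · convert sub_mem hb₂ ha₂ using 1; abel
    · convert sub_mem hc₃ hb₃ using 1; abel
  · rintro ⟨k₁, k₂, k₃⟩
    have half_mem {L : Submodule K M} {u v w : M} (hu : u ∈ L) (hv : v ∈ L) (hw : w = u + v) :
        (2 : K)⁻¹ • w ∈ L := hw ▸ L.smul_mem _ (add_mem hu hv)
    refine ⟨(2 : K)⁻¹ • (x₁ + x₂ - x₃),
      ⟨half_mem h₁ k₁ (by abel), half_mem h₂ (neg_mem k₂) (by abel)⟩,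
      (2 : K)⁻¹ • (x₂ + x₃ - x₁),
      ⟨half_mem h₂ k₂ (by abel), half_mem h₃ (neg_mem k₃) (by abel)⟩,
      (2 : K)⁻¹ • (x₃ + x₁ - x₂),
      ⟨half_mem h₃ k₃ (by abel), half_mem h₁ (neg_mem k₁) (by abel)⟩,
      by module, by module, by module⟩

end PairwiseSum

section Maslov

variable {V : Type*} [AddCommGroup V] [Module ℝ V] {ω : V →ₗ[ℝ] V →ₗ[ℝ] ℝ}
  {L₁ L₂ L₃ : Submodule ℝ V}

variable (ω L₁ L₂ L₃) in
noncomputable def maslovForm : QuadraticForm ℝ (L₁ × L₂ × L₃) :=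
  let p₁ := L₁.subtype ∘ₗ LinearMap.fst ℝ L₁ (L₂ × L₃)
  let p₂ := L₂.subtype ∘ₗ LinearMap.fst ℝ L₂ L₃ ∘ₗ LinearMap.snd ℝ L₁ (L₂ × L₃)
  let p₃ := L₃.subtype ∘ₗ LinearMap.snd ℝ L₂ L₃ ∘ₗ LinearMap.snd ℝ L₁ (L₂ × L₃)
  LinearMap.BilinMap.toQuadraticMap (ω.compl₁₂ p₁ p₂ + ω.compl₁₂ p₂ p₃ + ω.compl₁₂ p₃ p₁)

lemma maslovIndex_eq_qSignature :
    maslovIndex ω L₁ L₂ L₃ = qSignature (maslovForm ω L₁ L₂ L₃) := rfl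

lemma polar_maslovForm (hω : ω.IsAlt) (x y : L₁ × L₂ × L₃) :
    polar (maslovForm ω L₁ L₂ L₃) x y =
      ω y.1 (x.2.1 - x.2.2) + ω y.2.1 (x.2.2 - x.1) + ω y.2.2 (x.1 - x.2.1) := by
  simp only [maslovForm, LinearMap.BilinMap.polar_toQuadraticMap, LinearMap.add_apply,
    LinearMap.compl₁₂_apply, LinearMap.coe_comp, Function.comp_apply, LinearMap.coe_fst,
    LinearMap.coe_snd, Submodule.subtype_apply, map_sub]
  linear_combination -hω.neg (x.1 : V) y.2.1 - hω.neg (x.2.1 : V) y.2.2 - hω.neg (x.2.2 : V) y.1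

variable [FiniteDimensional ℝ V]

lemma IsLagrangianSub.orthogonal_eq (hnd : ω.Nondegenerate) {L : Submodule ℝ V}
    (hL : IsLagrangianSub ω L) : LinearMap.BilinForm.orthogonal ω L = L := by
  symm
  refine Submodule.eq_of_le_of_finrank_le (fun x hx => ?_) ?_
  · exact LinearMap.BilinForm.mem_orthogonal_iff.2 fun y hy => hL.1 y hy x hx
  · rw [LinearMap.BilinForm.finrank_orthogonal hnd]
    have := hL.2
    omega

lemma IsLagrangianSub.mem_iff_forall_apply_eq_zero (hnd : ω.Nondegenerate) {L : Submodule ℝ V}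
    (hL : IsLagrangianSub ω L) {v : V} : v ∈ L ↔ ∀ u ∈ L, ω u v = 0 := by
  rw [← LinearMap.BilinForm.mem_orthogonal_iff, hL.orthogonal_eq hnd]

lemma mem_radical_maslovForm_iff (hω : ω.IsAlt) (hnd : ω.Nondegenerate)
    (h₁ : IsLagrangianSub ω L₁) (h₂ : IsLagrangianSub ω L₂) (h₃ : IsLagrangianSub ω L₃)
    {x : L₁ × L₂ × L₃} :
    x ∈ (maslovForm ω L₁ L₂ L₃).radical ↔
      (x.2.1 - x.2.2 : V) ∈ L₁ ∧ (x.2.2 - x.1 : V) ∈ L₂ ∧ (x.1 - x.2.1 : V) ∈ L₃ := by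
  rw [h₁.mem_iff_forall_apply_eq_zero hnd, h₂.mem_iff_forall_apply_eq_zero hnd,
    h₃.mem_iff_forall_apply_eq_zero hnd, radical_eq_ker_polarBilin]
  simp only [LinearMap.mem_ker, LinearMap.ext_iff, polarBilin_apply_apply, polar_maslovForm hω,
    LinearMap.zero_apply]
  constructor
  · intro h
    refine ⟨fun u hu => ?_, fun u hu => ?_, fun u hu => ?_⟩
    · simpa using h (⟨u, hu⟩, 0, 0)
    · simpa using h (0, ⟨u, hu⟩, 0)
    · simpa using h (0, 0, ⟨u, hu⟩)
  · rintro ⟨k₁, k₂, k₃⟩ y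
    rw [k₁ _ y.1.2, k₂ _ y.2.1.2, k₃ _ y.2.2.2]
    norm_num

lemma finrank_radical_maslovForm (hω : ω.IsAlt) (hnd : ω.Nondegenerate)
    (h₁ : IsLagrangianSub ω L₁) (h₂ : IsLagrangianSub ω L₂) (h₃ : IsLagrangianSub ω L₃) :
    finrank ℝ (maslovForm ω L₁ L₂ L₃).radical =
      finrank ℝ ↥(L₁ ⊓ L₂) + finrank ℝ ↥(L₂ ⊓ L₃) + finrank ℝ ↥(L₃ ⊓ L₁) := by
  have hrange : LinearMap.range (pairwiseSum L₁ L₂ L₃) = (maslovForm ω L₁ L₂ L₃).radical := by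
    ext x
    rw [mem_range_pairwiseSum_iff, mem_radical_maslovForm_iff hω hnd h₁ h₂ h₃]
  rw [← hrange, LinearMap.finrank_range_of_inj pairwiseSum_injective, finrank_prod, finrank_prod,
    add_assoc]

end Maslov

/-- Parity of the Maslov-Kashiwara index:
`τ(L₁,L₂,L₃) ≡ g + dim(L₁∩L₂) + dim(L₂∩L₃) + dim(L₃∩L₁) (mod 2)`, where `dim V = 2g`. -/
theorem stmt_8 (V : Type*) [AddCommGroup V] [Module ℝ V] [FiniteDimensional ℝ V]
    (g : ℕ) (hdim : Module.finrank ℝ V = 2 * g)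
    (ω : V →ₗ[ℝ] V →ₗ[ℝ] ℝ) (halt : ∀ v : V, ω v v = 0)
    (hnd : ∀ v : V, (∀ w : V, ω v w = 0) → v = 0)
    (L₁ L₂ L₃ : Submodule ℝ V)
    (h1 : IsLagrangianSub ω L₁) (h2 : IsLagrangianSub ω L₂) (h3 : IsLagrangianSub ω L₃) :
    maslovIndex ω L₁ L₂ L₃ ≡
      (g : ℤ) + Module.finrank ℝ ↥(L₁ ⊓ L₂) + Module.finrank ℝ ↥(L₂ ⊓ L₃)
        + Module.finrank ℝ ↥(L₃ ⊓ L₁) [ZMOD 2] := by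
  have hω : ω.IsAlt := halt
  have hnd' : ω.Nondegenerate := hω.isRefl.nondegenerate_iff_separatingLeft.2 hnd
  have key := qSignature_add_finrank_radical_modEq (maslovForm ω L₁ L₂ L₃)
  rw [finrank_radical_maslovForm hω hnd' h1 h2 h3, finrank_prod, finrank_prod] at key
  have hL₁ := h1.2
  have hL₂ := h2.2
  have hL₃ := h3.2
  rw [maslovIndex_eq_qSignature, Int.ModEq]
  rw [Int.ModEq] at key
  omega
end

section
/- Let Z be a self-dual lattice in a 2g-dimensional symplectic vector space (V, ω), and L ⊂ V an isotropic subspace of dimension l ≤ g such that Z ∩ L spans L over ℝ. Then there exists a symplectic basis (W₁,…,W_g; W₁^⊥,…,W_g^⊥) of (V,ω) such that Z = ℤW₁ ⊕ ⋯ ⊕ ℤW_g ⊕ ℤW₁^⊥ ⊕ ⋯ ⊕ ℤW_g^⊥, L = ℝW₁ ⊕ ⋯ ⊕ ℝW_l, with ω(W_i, W_j^⊥) = δ_{ij} and ω(W_i, W_j) = ω(W_i^⊥, W_j^⊥) = 0. -/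
/-!
Self-duality makes every nonzero `x ∈ Z` divisible: if `ω x` takes the values `d ℤ` on `Z`, then
`x / d ∈ Z`, and `e = x / d` pairs to `1` with some `f ∈ Z`. Choosing `x ∈ Z ∩ L` when `L ≠ 0`,
the projection `v ↦ v + ω f v • e - ω e v • f` onto the `ω`-orthogonal `S₀` of `e, f` maps `Z` into
itself, so `Z = ℤ e ⊕ ℤ f ⊕ (Z ∩ S₀)`, the lattice `Z ∩ S₀` is self-dual in `S₀`, and
`L ∩ ker (ω f)` is an isotropic subspace of `S₀` of dimension `l - 1` spanned by lattice vectors.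
Induction on `g` finishes the proof, with `e` and `f` as the first basis vectors.
-/

open Submodule LinearMap

section

variable {K V : Type*} [Field K] [AddCommGroup V] [Module K V]
  {T : Submodule K V} {φ : V →ₗ[K] K} {v : V}

theorem Submodule.span_singleton_sup_inf_ker_eq (hv : v ∈ T) (hφ : φ v ≠ 0) :
    K ∙ v ⊔ T ⊓ ker φ = T := by
  rw [inf_comm, ← sup_inf_assoc_of_le _ ((span_singleton_le_iff_mem v T).2 hv),
    φ.span_singleton_sup_ker_eq_top hφ, top_inf_eq]

theorem Submodule.finrank_inf_ker_add_one [FiniteDimensional K V] (hv : v ∈ T) (hφ : φ v ≠ 0) :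
    Module.finrank K ↥(T ⊓ ker φ) + 1 = Module.finrank K T := by
  have hv0 : v ≠ 0 := fun h => hφ (by simp [h])
  have hdisj : K ∙ v ⊓ (T ⊓ ker φ) = ⊥ := by
    refine eq_bot_iff.2 fun x ⟨hx, _, hxφ⟩ => ?_
    obtain ⟨c, rfl⟩ := mem_span_singleton.1 hx
    simp_all
  have := finrank_sup_add_finrank_inf_eq (K ∙ v) (T ⊓ ker φ)
  rw [span_singleton_sup_inf_ker_eq hv hφ, hdisj, finrank_bot, finrank_span_singleton hv0] at this
  omega

end

theorem Submodule.exists_mem_ne_zero_of_span_eq {R M : Type*} [Semiring R] [AddCommMonoid M]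
    [Module R M] {s : Set M} {T : Submodule R M} (hs : span R s = T) (hT : T ≠ ⊥) :
    ∃ x ∈ s, x ≠ 0 := by
  by_contra! h
  exact hT (hs ▸ span_eq_bot.2 h)

theorem Submodule.span_inter_eq_of_mapsTo {R M : Type*} [Semiring R] [AddCommMonoid M] [Module R M]
    {s : Set M} {A B : Submodule R M} (π : M →ₗ[R] M) (hA : span R (s ∩ A) = A)
    (hπ : Set.MapsTo π (s ∩ A) (s ∩ B)) (hB : ∀ v ∈ B, v ∈ A ∧ π v = v) :
    span R (s ∩ B) = B := by
  refine le_antisymm (span_le.2 Set.inter_subset_right) fun v hv => ?_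
  obtain ⟨hvA, hπv⟩ := hB v hv
  rw [← hA] at hvA
  have := mem_map_of_mem (f := π) hvA
  rw [map_span, hπv] at this
  exact span_mono hπ.image_subset this

theorem Set.image_fin_cons_setOf_lt {α : Type*} {k l : ℕ} (hl : 0 < l) (x : α) (f : Fin k → α) :
    (Fin.cons x f : Fin (k + 1) → α) '' {i | (i : ℕ) < l} =
      insert x (f '' {i | (i : ℕ) < l - 1}) := by
  ext y
  simp only [Set.mem_image, Set.mem_ofPred_eq, Set.mem_insert_iff, Fin.exists_fin_succ,
    Fin.cons_zero, Fin.cons_succ, Fin.val_zero, Fin.val_succ]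
  constructor
  · rintro (⟨-, rfl⟩ | ⟨i, hi, rfl⟩)
    · exact Or.inl rfl
    · exact Or.inr ⟨i, by omega, rfl⟩
  · rintro (rfl | ⟨i, hi, rfl⟩)
    · exact Or.inl ⟨hl, rfl⟩
    · exact Or.inr ⟨i, by omega, rfl⟩

section Symplectic

variable {V : Type*} [AddCommGroup V] [Module ℝ V] {ω : V →ₗ[ℝ] V →ₗ[ℝ] ℝ}

/-- For `ω e f = 1`, the projection onto the `ω`-orthogonal of `e` and `f` along `span {e, f}`. -/
def hyperbolicProj (ω : V →ₗ[ℝ] V →ₗ[ℝ] ℝ) (e f : V) : V →ₗ[ℝ] V :=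
  LinearMap.id + (ω f).smulRight e - (ω e).smulRight f

@[simp]
theorem hyperbolicProj_apply (e f v : V) :
    hyperbolicProj ω e f v = v + ω f v • e - ω e v • f := rfl

theorem hyperbolicProj_add_smul_sub_smul (e f v : V) :
    hyperbolicProj ω e f v - ω f v • e + ω e v • f = v := by
  rw [hyperbolicProj_apply]
  abel

variable {e f : V}

theorem hyperbolicProj_mem_ker (hω : ω.IsAlt) (hef : ω e f = 1) (v : V) :
    hyperbolicProj ω e f v ∈ ker (ω e) ⊓ ker (ω f) := by
  have hfe : ω f e = -1 := by rw [← hω.neg, hef]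
  simp [hω.self_eq_zero, hef, hfe]

theorem hyperbolicProj_mem_inf_ker (hω : ω.IsAlt) (hef : ω e f = 1) {S : Submodule ℝ V}
    (heS : e ∈ S) (hfS : f ∈ S) {v : V} (hv : v ∈ S) :
    hyperbolicProj ω e f v ∈ S ⊓ (ker (ω e) ⊓ ker (ω f)) := by
  refine ⟨?_, hyperbolicProj_mem_ker hω hef v⟩
  rw [hyperbolicProj_apply]
  exact S.sub_mem (S.add_mem hv (S.smul_mem _ heS)) (S.smul_mem _ hfS)

theorem finrank_inf_ker_inf_ker_add_two [FiniteDimensional ℝ V] (hω : ω.IsAlt) (hef : ω e f = 1)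
    {S : Submodule ℝ V} (heS : e ∈ S) (hfS : f ∈ S) :
    Module.finrank ℝ ↥(S ⊓ (ker (ω e) ⊓ ker (ω f))) + 2 = Module.finrank ℝ S := by
  have hfe : ω f e ≠ 0 := by rw [← hω.neg, hef]; norm_num
  have h₁ := finrank_inf_ker_add_one hfS (φ := ω e) (by rw [hef]; exact one_ne_zero)
  have h₂ := finrank_inf_ker_add_one (T := S ⊓ ker (ω e)) ⟨heS, hω e⟩ hfe
  rw [← inf_assoc]
  omega

theorem hyperbolicProj_eq_self {v : V} (hv : v ∈ ker (ω e) ⊓ ker (ω f)) :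
    hyperbolicProj ω e f v = v := by
  simp_all

theorem apply_hyperbolicProj (hω : ω.IsAlt) {v : V} (hv : v ∈ ker (ω e) ⊓ ker (ω f)) (w : V) :
    ω v (hyperbolicProj ω e f w) = ω v w := by
  have hve : ω v e = 0 := hω.eq_iff.1 hv.1
  have hvf : ω v f = 0 := hω.eq_iff.1 hv.2
  simp [hve, hvf]

theorem hyperbolicProj_mem_of_integral {Z : AddSubgroup V} (he : e ∈ Z) (hf : f ∈ Z) {z : V}
    (hz : z ∈ Z) (hez : ∃ n : ℤ, ω e z = n) (hfz : ∃ n : ℤ, ω f z = n) :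
    hyperbolicProj ω e f z ∈ Z := by
  obtain ⟨m, hm⟩ := hez
  obtain ⟨n, hn⟩ := hfz
  rw [hyperbolicProj_apply, hm, hn, Int.cast_smul_eq_zsmul, Int.cast_smul_eq_zsmul]
  exact Z.sub_mem (Z.add_mem hz (Z.zsmul_mem he n)) (Z.zsmul_mem hf m)

/-- `Z ∩ S` is a self-dual lattice of the symplectic space `(S, ω)`. Stating this for subspaces
of a fixed `V` lets the induction pass to orthogonal complements without changing the ambient
type. -/
structure IsSelfDualLatticeIn (ω : V →ₗ[ℝ] V →ₗ[ℝ] ℝ) (Z : AddSubgroup V) (S : Submodule ℝ V) :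
    Prop where
  nondegenerate : ∀ v ∈ S, (∀ w ∈ S, ω v w = 0) → v = 0
  span_inter_eq : span ℝ ((Z : Set V) ∩ S) = S
  mem_iff : ∀ x ∈ S, x ∈ Z ↔ ∀ w ∈ Z, w ∈ S → ∃ n : ℤ, ω x w = n

namespace IsSelfDualLatticeIn

variable {Z : AddSubgroup V} {S : Submodule ℝ V} (hZ : IsSelfDualLatticeIn ω Z S)
include hZ

theorem exists_smul_apply_eq_one {x : V} (hxZ : x ∈ Z) (hxS : x ∈ S) (hx : x ≠ 0) :
    ∃ c : ℝ, c • x ∈ Z ∧ ∃ f ∈ Z, f ∈ S ∧ ω (c • x) f = 1 := by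
  let H : AddSubgroup ℤ :=
    ((Z ⊓ S.toAddSubgroup).map (ω x).toAddMonoidHom).comap (Int.castAddHom ℝ)
  obtain ⟨d, hd⟩ := Int.subgroup_cyclic H
  have hdvd : ∀ w ∈ Z, w ∈ S → ∃ n : ℤ, ω x w = n * d := by
    intro w hw hwS
    obtain ⟨m, hm⟩ := (hZ.mem_iff x hxS).1 hxZ w hw hwS
    have hmH : m ∈ H := ⟨w, ⟨hw, hwS⟩, hm⟩
    rw [hd, AddSubgroup.mem_closure_singleton] at hmH
    obtain ⟨n, rfl⟩ := hmH
    exact ⟨n, by simp [hm]⟩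
  obtain ⟨f, ⟨hfZ, hfS⟩, hfd⟩ : d ∈ H := hd ▸ AddSubgroup.mem_closure_singleton_self d
  have hd0 : (d : ℝ) ≠ 0 := by
    intro hd0
    refine hx (hZ.nondegenerate x hxS fun w hw => ?_)
    have hS : S ≤ ker (ω x) := hZ.span_inter_eq ▸ span_le.2 fun w ⟨hw, hwS⟩ => by
      obtain ⟨n, hn⟩ := hdvd w hw hwS
      simp [hn, hd0]
    exact hS hw
  refine ⟨(d : ℝ)⁻¹, (hZ.mem_iff _ (S.smul_mem _ hxS)).2 fun w hw hwS => ?_, f, hfZ, hfS, ?_⟩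
  · obtain ⟨n, hn⟩ := hdvd w hw hwS
    exact ⟨n, by rw [map_smul, LinearMap.smul_apply, hn, smul_eq_mul]; field_simp⟩
  · simp_all

variable (he : e ∈ Z) (heS : e ∈ S) (hf : f ∈ Z) (hfS : f ∈ S)
include he heS hf hfS

theorem mapsTo_hyperbolicProj (hω : ω.IsAlt) (hef : ω e f = 1) :
    Set.MapsTo (hyperbolicProj ω e f) ((Z : Set V) ∩ S)
      ((Z : Set V) ∩ ↑(S ⊓ (ker (ω e) ⊓ ker (ω f)))) := by
  rintro z ⟨hz, hzS⟩
  exact ⟨hyperbolicProj_mem_of_integral he hf hz ((hZ.mem_iff e heS).1 he z hz hzS)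
    ((hZ.mem_iff f hfS).1 hf z hz hzS), hyperbolicProj_mem_inf_ker hω hef heS hfS hzS⟩

theorem inf_ker (hω : ω.IsAlt) (hef : ω e f = 1) :
    IsSelfDualLatticeIn ω Z (S ⊓ (ker (ω e) ⊓ ker (ω f))) where
  nondegenerate v hv hv0 := hZ.nondegenerate v hv.1 fun w hw => by
    rw [← apply_hyperbolicProj hω hv.2]
    exact hv0 _ (hyperbolicProj_mem_inf_ker hω hef heS hfS hw)
  span_inter_eq := span_inter_eq_of_mapsTo _ hZ.span_inter_eq
    (hZ.mapsTo_hyperbolicProj he heS hf hfS hω hef) fun v hv => ⟨hv.1, hyperbolicProj_eq_self hv.2⟩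
  mem_iff x hx := by
    refine ⟨fun hxZ w hw hwS => (hZ.mem_iff x hx.1).1 hxZ w hw hwS.1, fun h => ?_⟩
    refine (hZ.mem_iff x hx.1).2 fun w hw hwS => ?_
    obtain ⟨hπZ, hπS⟩ := hZ.mapsTo_hyperbolicProj he heS hf hfS hω hef ⟨hw, hwS⟩
    rw [← apply_hyperbolicProj hω hx.2]
    exact h _ hπZ hπS

theorem inf_eq_sup_closure (hω : ω.IsAlt) (hef : ω e f = 1) :
    Z ⊓ S.toAddSubgroup =
      Z ⊓ (S ⊓ (ker (ω e) ⊓ ker (ω f))).toAddSubgroup ⊔ AddSubgroup.closure {e, f} := by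
  refine le_antisymm ?_ (sup_le (inf_le_inf_left _ ?_) ?_)
  · rintro z ⟨hz, hzS⟩
    obtain ⟨m, hm⟩ := (hZ.mem_iff e heS).1 he z hz hzS
    obtain ⟨n, hn⟩ := (hZ.mem_iff f hfS).1 hf z hz hzS
    have hπ := hZ.mapsTo_hyperbolicProj he heS hf hfS hω hef ⟨hz, hzS⟩
    rw [← hyperbolicProj_add_smul_sub_smul (ω := ω) e f z, hm, hn, Int.cast_smul_eq_zsmul,
      Int.cast_smul_eq_zsmul]
    refine add_mem (sub_mem (AddSubgroup.mem_sup_left hπ) ?_) ?_ <;>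
      exact AddSubgroup.mem_sup_right (zsmul_mem (AddSubgroup.subset_closure (by simp)) _)
  · exact Submodule.toAddSubgroup_mono inf_le_left
  · rw [AddSubgroup.closure_le, Set.insert_subset_iff, Set.singleton_subset_iff]
    exact ⟨⟨he, heS⟩, ⟨hf, hfS⟩⟩

theorem span_inter_inf_ker_eq (hω : ω.IsAlt) (hef : ω e f = 1) {L : Submodule ℝ V} (hLS : L ≤ S)
    (hiso : ∀ x ∈ L, ∀ y ∈ L, ω x y = 0) (heL : e ∈ L) (hspan : span ℝ ((Z : Set V) ∩ L) = L) :
    span ℝ ((Z : Set V) ∩ ↑(L ⊓ ker (ω f))) = L ⊓ ker (ω f) := by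
  refine span_inter_eq_of_mapsTo (hyperbolicProj ω e f) hspan (fun z ⟨hz, hzL⟩ => ?_)
    fun v hv => ⟨hv.1, hyperbolicProj_eq_self ⟨hiso e heL v hv.1, hv.2⟩⟩
  obtain ⟨hπZ, -, hπ⟩ := hZ.mapsTo_hyperbolicProj he heS hf hfS hω hef ⟨hz, hLS hzL⟩
  refine ⟨hπZ, ?_, hπ.2⟩
  rw [SetLike.mem_coe, hyperbolicProj_apply, hiso e heL z hzL, zero_smul, sub_zero]
  exact L.add_mem hzL (L.smul_mem _ heL)

end IsSelfDualLatticeIn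

structure IsSymplecticBasisOf (ω : V →ₗ[ℝ] V →ₗ[ℝ] ℝ) (Λ : AddSubgroup V) {g : ℕ}
    (W Wp : Fin g → V) : Prop where
  apply_eq_ite : ∀ i j, ω (W i) (Wp j) = if i = j then 1 else 0
  isotropic : ∀ i j, ω (W i) (W j) = 0
  isotropic' : ∀ i j, ω (Wp i) (Wp j) = 0
  eq_closure : Λ = AddSubgroup.closure (Set.range W ∪ Set.range Wp)

theorem IsSymplecticBasisOf.cons (hω : ω.IsAlt) {Λ : AddSubgroup V} {g : ℕ} {W Wp : Fin g → V}
    (h : IsSymplecticBasisOf ω Λ W Wp) {e f : V} (hef : ω e f = 1)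
    (hΛ : ∀ v ∈ Λ, ω e v = 0 ∧ ω f v = 0) :
    IsSymplecticBasisOf ω (Λ ⊔ AddSubgroup.closure {e, f}) (Fin.cons e W) (Fin.cons f Wp) := by
  have hW i : ω e (W i) = 0 ∧ ω f (W i) = 0 :=
    hΛ _ (h.eq_closure ▸ AddSubgroup.subset_closure (Or.inl ⟨i, rfl⟩))
  have hWp i : ω e (Wp i) = 0 ∧ ω f (Wp i) = 0 :=
    hΛ _ (h.eq_closure ▸ AddSubgroup.subset_closure (Or.inr ⟨i, rfl⟩))
  refine ⟨?_, ?_, ?_, ?_⟩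
  · simp [Fin.forall_fin_succ, hef, (hWp _).1, hω.eq_iff.1 (hW _).2, h.apply_eq_ite,
      Fin.succ_ne_zero, (Fin.succ_ne_zero _).symm]
  · simp [Fin.forall_fin_succ, hω.self_eq_zero e, (hW _).1, hω.eq_iff.1 (hW _).1, h.isotropic]
  · simp [Fin.forall_fin_succ, hω.self_eq_zero f, (hWp _).2, hω.eq_iff.1 (hWp _).2, h.isotropic']
  · rw [Fin.range_cons, Fin.range_cons, h.eq_closure, ← AddSubgroup.closure_union]
    congr 1
    ext
    simp only [Set.mem_union, Set.mem_insert_iff, Set.mem_singleton_iff]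
    tauto

theorem IsSelfDualLatticeIn.exists_isSymplecticBasisOf [FiniteDimensional ℝ V] (hω : ω.IsAlt)
    {Z : AddSubgroup V} {g : ℕ} {S L : Submodule ℝ V} {l : ℕ} (hZ : IsSelfDualLatticeIn ω Z S)
    (hdim : Module.finrank ℝ S = 2 * g) (hLS : L ≤ S) (hiso : ∀ x ∈ L, ∀ y ∈ L, ω x y = 0)
    (hLdim : Module.finrank ℝ L = l) (hspan : span ℝ ((Z : Set V) ∩ L) = L) :
    ∃ W Wp : Fin g → V, IsSymplecticBasisOf ω (Z ⊓ S.toAddSubgroup) W Wp ∧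
      L = span ℝ (W '' {i | (i : ℕ) < l}) := by
  induction g generalizing S L l with
  | zero =>
    have hS : S = ⊥ := Submodule.finrank_eq_zero.1 hdim
    have hL : L = ⊥ := eq_bot_iff.2 (hS ▸ hLS)
    refine ⟨Fin.elim0, Fin.elim0, ⟨(·.elim0), (·.elim0), (·.elim0), ?_⟩, ?_⟩ <;>
      simp [hS, hL, Set.eq_empty_of_isEmpty]
  | succ k ih =>
    obtain ⟨x, hxZ, hxS, hx0, hxL⟩ : ∃ x ∈ Z, x ∈ S ∧ x ≠ 0 ∧ (0 < l → x ∈ L) := by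
      rcases Nat.eq_zero_or_pos l with rfl | hl
      · obtain ⟨x, ⟨hxZ, hxS⟩, hx0⟩ := exists_mem_ne_zero_of_span_eq hZ.span_inter_eq
          fun h => by rw [h, finrank_bot] at hdim; omega
        exact ⟨x, hxZ, hxS, hx0, by omega⟩
      · obtain ⟨x, ⟨hxZ, hxL⟩, hx0⟩ := exists_mem_ne_zero_of_span_eq hspan
          fun h => by rw [h, finrank_bot] at hLdim; omega
        exact ⟨x, hxZ, hLS hxL, hx0, fun _ => hxL⟩
    obtain ⟨c, he, f, hf, hfS, hef⟩ := hZ.exists_smul_apply_eq_one hxZ hxS hx0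
    set e := c • x
    have heS : e ∈ S := S.smul_mem c hxS
    have hfe : ω f e ≠ 0 := by rw [← hω.neg, hef]; norm_num
    have hdim₀ : Module.finrank ℝ ↥(S ⊓ (ker (ω e) ⊓ ker (ω f))) = 2 * k := by
      have := finrank_inf_ker_inf_ker_add_two hω hef heS hfS
      omega
    have hZ₀ := hZ.inf_ker he heS hf hfS hω hef
    obtain ⟨W, Wp, hW, hLW⟩ : ∃ W Wp : Fin k → V,
        IsSymplecticBasisOf ω (Z ⊓ (S ⊓ (ker (ω e) ⊓ ker (ω f))).toAddSubgroup) W Wp ∧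
          L = span ℝ ((Fin.cons e W : Fin (k + 1) → V) '' {i | (i : ℕ) < l}) := by
      rcases Nat.eq_zero_or_pos l with rfl | hl
      · obtain ⟨W, Wp, hW, -⟩ := ih hZ₀ hdim₀ bot_le (by simp) (finrank_bot ℝ V) (by simp)
        exact ⟨W, Wp, hW, by simp [Submodule.finrank_eq_zero.1 hLdim]⟩
      · have heL : e ∈ L := L.smul_mem c (hxL hl)
        obtain ⟨W, Wp, hW, hL₀⟩ := ih (L := L ⊓ ker (ω f)) (l := l - 1) hZ₀ hdim₀
          (fun v hv => ⟨hLS hv.1, hiso e heL v hv.1, hv.2⟩)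
          (fun x hx y hy => hiso x hx.1 y hy.1)
          (by have := finrank_inf_ker_add_one heL hfe; omega)
          (hZ.span_inter_inf_ker_eq he heS hf hfS hω hef hLS hiso heL hspan)
        refine ⟨W, Wp, hW, ?_⟩
        rw [Set.image_fin_cons_setOf_lt hl, span_insert, ← hL₀,
          span_singleton_sup_inf_ker_eq heL hfe]
    refine ⟨Fin.cons e W, Fin.cons f Wp, ?_, hLW⟩
    rw [hZ.inf_eq_sup_closure he heS hf hfS hω hef]
    exact hW.cons hω hef fun v hv => hv.2.2

end Symplectic

theorem stmt_10_general (g : ℕ) (V : Type*) [AddCommGroup V] [Module ℝ V]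
    (ω : V →ₗ[ℝ] V →ₗ[ℝ] ℝ) (halt : ∀ v : V, ω v v = 0)
    (hnd : ∀ v : V, (∀ w : V, ω v w = 0) → v = 0)
    (Z : AddSubgroup V)
    (hlat : ∃ b : Module.Basis (Fin (2 * g)) ℝ V, Z = AddSubgroup.closure (Set.range b))
    (hsd : ∀ x : V, x ∈ Z ↔ ∀ w ∈ Z, ∃ n : ℤ, ω x w = (n : ℝ))
    (L : Submodule ℝ V) (l : ℕ)
    (hiso : ∀ x ∈ L, ∀ y ∈ L, ω x y = 0)
    (hLdim : Module.finrank ℝ L = l)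
    (hspan : Submodule.span ℝ ((Z : Set V) ∩ (L : Set V)) = L) :
    ∃ W Wp : Fin g → V,
      (∀ i j, ω (W i) (Wp j) = if i = j then 1 else 0) ∧
      (∀ i j, ω (W i) (W j) = 0) ∧
      (∀ i j, ω (Wp i) (Wp j) = 0) ∧
      Z = AddSubgroup.closure (Set.range W ∪ Set.range Wp) ∧
      L = Submodule.span ℝ (W '' {i : Fin g | (i : ℕ) < l}) := by
  obtain ⟨b, hb⟩ := hlat
  have : FiniteDimensional ℝ V := b.finiteDimensional_of_finite
  have hZ : IsSelfDualLatticeIn ω Z ⊤ :=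
    { nondegenerate := fun v _ hv => hnd v fun w => hv w trivial
      span_inter_eq := by
        rw [top_coe, Set.inter_univ, eq_top_iff, ← b.span_eq, hb]
        exact span_mono AddSubgroup.subset_closure
      mem_iff := fun x _ => by simpa using hsd x }
  obtain ⟨W, Wp, hW, hL⟩ := hZ.exists_isSymplecticBasisOf halt
    (by rw [finrank_top, Module.finrank_eq_card_basis b, Fintype.card_fin]) le_top hiso hLdim hspan
  exact ⟨W, Wp, hW.apply_eq_ite, hW.isotropic, hW.isotropic', by simpa using hW.eq_closure, hL⟩

/-- Adapted integral symplectic basis for a self-dual lattice and a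
rational isotropic subspace: if `Z` is a self-dual lattice in the `2g`-dimensional
symplectic space `(V, ω)` and `L` an isotropic subspace of dimension `l ≤ g` spanned
over `ℝ` by `Z ∩ L`, there is a symplectic basis `(W₁,…,W_g; W₁^⊥,…,W_g^⊥)` generating
`Z` over `ℤ` such that `L = ℝW₁ ⊕ ⋯ ⊕ ℝW_l`. -/
theorem stmt_10 (g : ℕ) (V : Type*) [AddCommGroup V] [Module ℝ V] [FiniteDimensional ℝ V]
    (hdim : Module.finrank ℝ V = 2 * g)
    (ω : V →ₗ[ℝ] V →ₗ[ℝ] ℝ) (halt : ∀ v : V, ω v v = 0)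
    (hnd : ∀ v : V, (∀ w : V, ω v w = 0) → v = 0)
    (Z : AddSubgroup V)
    (hlat : ∃ b : Module.Basis (Fin (2 * g)) ℝ V, Z = AddSubgroup.closure (Set.range b))
    (hsd : ∀ x : V, x ∈ Z ↔ ∀ w ∈ Z, ∃ n : ℤ, ω x w = (n : ℝ))
    (L : Submodule ℝ V) (l : ℕ) (hl : l ≤ g)
    (hiso : ∀ x ∈ L, ∀ y ∈ L, ω x y = 0)
    (hLdim : Module.finrank ℝ L = l)
    (hspan : Submodule.span ℝ ((Z : Set V) ∩ (L : Set V)) = L) :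
    ∃ W Wp : Fin g → V,
      (∀ i j, ω (W i) (Wp j) = if i = j then 1 else 0) ∧
      (∀ i j, ω (W i) (W j) = 0) ∧
      (∀ i j, ω (Wp i) (Wp j) = 0) ∧
      Z = AddSubgroup.closure (Set.range W ∪ Set.range Wp) ∧
      L = Submodule.span ℝ (W '' {i : Fin g | (i : ℕ) < l}) :=
  stmt_10_general g V ω halt hnd Z hlat hsd L l hiso hLdim hspan
end
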